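/- arXiv:1910.09262 — 6 statements merged into one kernel-verified Lean document; each statement's English description precedes it below -/
import Mathlib

section
/- For any prime p ≥ 3 and any integer k with 1 ≤ k ≤ (p-1)/2, we have H_{(p-1)/2 - k} ≡ -2 q_2 + 2 H_{2k} - H_k (mod p), where q_2 = (2^{p-1} - 1)/p is the Fermat quotient of 2. -/
/-!
Everything is reduced to identities in `𝔽_p`, `p = 2m + 1`. Binomially, `2 q₂ = Σ_{0<j<p} C(p,j)/p`,
and `C(p,j)/p ≡ (-1)^(j-1)/j`, so `2 q₂` reduces to the alternating harmonic sum up to `p - 1`,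
which is `H_{2m} - H_m = -H_m` (as `H_{p-1} ≡ 0`) by splitting off the odd terms. Since
`2(m - j) ≡ -(2j + 1)`, the top `k` terms of `H_m` are `-2` times the reciprocals of the first
`k` odd numbers, which is the odd part of `H_{2k}`. The congruence of rationals is read off
through reduction mod `p`, a ring homomorphism on the rationals with denominator prime to `p`.
-/

/-- The `n`-th harmonic number as a rational. -/
def H (n : ℕ) : ℚ := ∑ i ∈ Finset.range n, (1 : ℚ) / (i + 1)

/-- Congruence of rationals modulo `m`: the difference is `m` times a rational
whose denominator is not divisible by `m`'s prime. -/
def ratCongr (m : ℕ) (x y : ℚ) : Prop :=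
  ∃ r : ℚ, ¬ ((m : ℤ) ∣ (r.den : ℤ)) ∧ x - y = (m : ℚ) * r

open Finset

lemma ZMod.natCast_ne_zero_of_pos_of_lt {n a : ℕ} (h0 : 0 < a) (h : a < n) : (a : ZMod n) ≠ 0 := by
  rw [Ne, ZMod.natCast_eq_zero_iff]
  exact Nat.not_dvd_of_pos_of_lt h0 h

lemma ZMod.natCast_choose_pred_eq_neg_one_pow {p : ℕ} (hp : p.Prime) {j : ℕ} (hj : j < p) :
    (((p - 1).choose j : ℕ) : ZMod p) = (-1) ^ j := by
  induction j with
  | zero => simp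
  | succ j ih =>
    have hpascal : (p - 1).choose j + (p - 1).choose (j + 1) = p.choose (j + 1) := by
      rw [← Nat.choose_succ_succ', Nat.sub_add_cancel hp.one_le]
    have hsum : (((p - 1).choose j : ℕ) : ZMod p) + (((p - 1).choose (j + 1) : ℕ) : ZMod p) = 0 := by
      rw [← Nat.cast_add, hpascal, ZMod.natCast_eq_zero_iff]
      exact hp.dvd_choose_self j.succ_ne_zero hj
    rw [ih (by omega)] at hsum
    linear_combination hsum

lemma Nat.Prime.choose_div_mul_eq_choose_pred {p k : ℕ} (hp : p.Prime) (hk0 : k ≠ 0)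
    (hkp : k < p) : p.choose k / p * k = (p - 1).choose (k - 1) := by
  have h := Nat.add_one_mul_choose_eq (p - 1) (k - 1)
  rw [Nat.sub_add_cancel hp.one_le, Nat.sub_add_cancel (Nat.one_le_iff_ne_zero.2 hk0),
    ← Nat.div_mul_cancel (hp.dvd_choose_self hk0 hkp), mul_comm (p.choose k / p) p, mul_assoc] at h
  exact (Nat.eq_of_mul_eq_mul_left hp.pos h).symm

lemma ZMod.natCast_choose_div_eq {p k : ℕ} [Fact p.Prime] (hk0 : k ≠ 0) (hkp : k < p) :
    ((p.choose k / p : ℕ) : ZMod p) = (-1) ^ (k - 1) * (k : ZMod p)⁻¹ := by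
  have hp : p.Prime := Fact.out
  have hk : (k : ZMod p) ≠ 0 := ZMod.natCast_ne_zero_of_pos_of_lt (Nat.pos_of_ne_zero hk0) hkp
  rw [eq_mul_inv_iff_mul_eq₀ hk, ← ZMod.natCast_choose_pred_eq_neg_one_pow hp (by omega : k - 1 < p),
    ← hp.choose_div_mul_eq_choose_pred hk0 hkp]
  push_cast
  ring

lemma two_pow_pred_sub_one_div_eq {p : ℕ} (hp : p.Prime) :
    (2 ^ (p - 1) - 1 : ℚ) / p = 2⁻¹ * ∑ k ∈ Ioo 0 p, ((p.choose k / p : ℕ) : ℚ) := by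
  have h := add_pow_prime_eq' hp (1 : ℚ) 1
  have hpow : (2 : ℚ) ^ p = 2 * 2 ^ (p - 1) := by
    rw [← pow_succ', Nat.sub_add_cancel hp.one_le]
  rw [one_add_one_eq_two, hpow] at h
  simp only [one_pow, one_mul] at h
  have hp0 : (p : ℚ) ≠ 0 := by exact_mod_cast hp.ne_zero
  field_simp
  linear_combination h

section HarmonicIn

variable (K : Type*) [Field K]

def harmonicIn (n : ℕ) : K := ∑ i ∈ range n, ((i : K) + 1)⁻¹

def oddHarmonicIn (n : ℕ) : K := ∑ i ∈ range n, (2 * (i : K) + 1)⁻¹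

def altHarmonicIn (n : ℕ) : K := ∑ i ∈ range n, (-1) ^ i * ((i : K) + 1)⁻¹

variable {K}

@[simp] lemma harmonicIn_zero : harmonicIn K 0 = 0 := sum_range_zero _

lemma harmonicIn_succ (n : ℕ) : harmonicIn K (n + 1) = harmonicIn K n + ((n : K) + 1)⁻¹ :=
  sum_range_succ _ _

lemma oddHarmonicIn_succ (n : ℕ) :
    oddHarmonicIn K (n + 1) = oddHarmonicIn K n + (2 * (n : K) + 1)⁻¹ :=
  sum_range_succ _ _

lemma inv_two_mul_add_two (x : K) : (2 * x + 2)⁻¹ = 2⁻¹ * (x + 1)⁻¹ := by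
  rw [← mul_inv, mul_add_one]

lemma harmonicIn_two_mul (n : ℕ) :
    harmonicIn K (2 * n) = oddHarmonicIn K n + 2⁻¹ * harmonicIn K n := by
  induction n with
  | zero => simp [oddHarmonicIn]
  | succ n ih =>
    simp only [harmonicIn, oddHarmonicIn, mul_add_one, sum_range_succ] at ih ⊢
    rw [ih]
    push_cast
    rw [add_assoc (2 * (n : K)) 1 1, one_add_one_eq_two, inv_two_mul_add_two]
    ring

lemma altHarmonicIn_two_mul (n : ℕ) :
    altHarmonicIn K (2 * n) = oddHarmonicIn K n - 2⁻¹ * harmonicIn K n := by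
  induction n with
  | zero => simp [altHarmonicIn, oddHarmonicIn]
  | succ n ih =>
    simp only [altHarmonicIn, harmonicIn, oddHarmonicIn, mul_add_one, sum_range_succ] at ih ⊢
    rw [ih]
    push_cast
    rw [add_assoc (2 * (n : K)) 1 1, one_add_one_eq_two, inv_two_mul_add_two, pow_succ,
      pow_mul, neg_one_sq, one_pow]
    ring

end HarmonicIn

section ModP

variable {p : ℕ} [Fact p.Prime]

lemma harmonicIn_sub_harmonicIn_sub {m k : ℕ} (hm : 2 * m + 1 = p) (hk : k ≤ m) :
    harmonicIn (ZMod p) m - harmonicIn (ZMod p) (m - k) = -2 * oddHarmonicIn (ZMod p) k := by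
  induction k with
  | zero => simp [oddHarmonicIn]
  | succ k ih =>
    have hp : ((2 * m + 1 : ℕ) : ZMod p) = 0 := by rw [hm, ZMod.natCast_self]
    have hunit : (2 : ZMod p) * (m + 1) = 1 := by push_cast at hp; linear_combination hp
    have hterm : ((m - (k + 1) : ℕ) : ZMod p) + 1 = -(2 * k + 1) * (m + 1) := by
      rw [Nat.cast_sub hk]
      push_cast
      linear_combination ((k : ZMod p) + 1) * hunit
    have ih := ih (by omega)
    rw [show m - k = m - (k + 1) + 1 by omega, harmonicIn_succ, hterm, mul_inv, neg_mul, inv_neg,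
      ← eq_inv_of_mul_eq_one_left hunit] at ih
    rw [oddHarmonicIn_succ]
    linear_combination ih

lemma harmonicIn_half_sub {m k : ℕ} (hm : 2 * m + 1 = p) (hk : k ≤ m) :
    harmonicIn (ZMod p) (m - k) =
      -altHarmonicIn (ZMod p) (2 * m) + 2 * harmonicIn (ZMod p) (2 * k) - harmonicIn (ZMod p) k := by
  have hp : ((2 * m + 1 : ℕ) : ZMod p) = 0 := by rw [hm, ZMod.natCast_self]
  have h2 : (2 : ZMod p) ≠ 0 := fun h => by push_cast at hp; simp [h] at hp
  have hk' := harmonicIn_sub_harmonicIn_sub hm hk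
  have hm' := harmonicIn_sub_harmonicIn_sub hm le_rfl
  rw [Nat.sub_self, harmonicIn_zero] at hm'
  linear_combination -hk' + altHarmonicIn_two_mul (K := ZMod p) m
    - 2 * harmonicIn_two_mul (K := ZMod p) k + (1 - 2⁻¹) * hm'
    + (oddHarmonicIn (ZMod p) m - harmonicIn (ZMod p) k) * mul_inv_cancel₀ h2

lemma sum_cast_choose_div_eq_altHarmonicIn :
    ∑ k ∈ Ioo 0 p, ((p.choose k / p : ℕ) : ZMod p) = altHarmonicIn (ZMod p) (p - 1) := by
  rw [← Ico_add_one_left_eq_Ioo, sum_Ico_eq_sum_range, altHarmonicIn]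
  refine sum_congr rfl fun i hi => ?_
  rw [zero_add, add_comm 1 i, ZMod.natCast_choose_div_eq (Nat.add_one_ne_zero i) (by grind),
    Nat.add_sub_cancel, Nat.cast_add_one]

end ModP

namespace Rat

variable (p : ℕ) [Fact p.Prime]

def pIntegral : Subring ℚ where
  carrier := {q | (q.den : ZMod p) ≠ 0}
  mul_mem' {q r} hq hr := ne_zero_of_dvd_ne_zero (by push_cast; exact mul_ne_zero hq hr)
    (Nat.cast_dvd_cast (mul_den_dvd q r))
  one_mem' := by simp
  add_mem' {q r} hq hr := ne_zero_of_dvd_ne_zero (by push_cast; exact mul_ne_zero hq hr)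
    (Nat.cast_dvd_cast (add_den_dvd q r))
  zero_mem' := by simp
  neg_mem' := by simp

def pIntegralToZMod : pIntegral p →+* ZMod p where
  toFun q := ((q : ℚ) : ZMod p)
  map_one' := by simp
  map_mul' q r := cast_mul_of_ne_zero q.2 r.2
  map_zero' := by simp
  map_add' q r := cast_add_of_ne_zero q.2 r.2

variable {p}

@[simp] lemma pIntegralToZMod_apply (q : pIntegral p) :
    pIntegralToZMod p q = ((q : ℚ) : ZMod p) := rfl

lemma inv_natCast_mem_pIntegral {n : ℕ} (hn : (n : ZMod p) ≠ 0) : (n : ℚ)⁻¹ ∈ pIntegral p := by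
  have hn0 : n ≠ 0 := by rintro rfl; simp at hn
  change ((n : ℚ)⁻¹.den : ZMod p) ≠ 0
  rwa [inv_natCast_den_of_pos (Nat.pos_of_ne_zero hn0)]

end Rat

section Transfer

variable {p : ℕ} [Fact p.Prime]

lemma ratCongr_of_pIntegralToZMod_eq {x y : Rat.pIntegral p}
    (h : Rat.pIntegralToZMod p x = Rat.pIntegralToZMod p y) : ratCongr p x y := by
  set z : ℚ := ((x - y : Rat.pIntegral p) : ℚ)
  have hden : (z.den : ZMod p) ≠ 0 := (x - y).2
  have hnum : (z.num : ZMod p) = 0 := by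
    rwa [← sub_eq_zero, ← map_sub, Rat.pIntegralToZMod_apply, Rat.cast_def, div_eq_zero_iff,
      or_iff_left hden] at h
  obtain ⟨a, ha⟩ := (ZMod.intCast_zmod_eq_zero_iff_dvd _ p).1 hnum
  refine ⟨Rat.divInt a z.den, fun hp => hden ?_, ?_⟩
  · exact_mod_cast (ZMod.intCast_zmod_eq_zero_iff_dvd (z.den : ℤ) p).2 (hp.trans (Rat.den_dvd a z.den))
  · change z = _
    conv_lhs => rw [← Rat.num_div_den z, ha]
    rw [Rat.divInt_eq_div]
    push_cast
    ring

lemma H_succ (n : ℕ) : H (n + 1) = H n + ((n + 1 : ℕ) : ℚ)⁻¹ := by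
  rw [H, sum_range_succ, ← H, one_div, Nat.cast_add_one]

lemma H_mem_pIntegral {n : ℕ} (hn : n < p) : H n ∈ Rat.pIntegral p := by
  induction n with
  | zero => simp [H, zero_mem]
  | succ n ih =>
    rw [H_succ]
    exact add_mem (ih (by omega))
      (Rat.inv_natCast_mem_pIntegral (ZMod.natCast_ne_zero_of_pos_of_lt n.succ_pos hn))

lemma cast_H {n : ℕ} (hn : n < p) : ((H n : ℚ) : ZMod p) = harmonicIn (ZMod p) n := by
  induction n with
  | zero => simp [H]
  | succ n ih =>
    have hn' : ((n + 1 : ℕ) : ZMod p) ≠ 0 := ZMod.natCast_ne_zero_of_pos_of_lt n.succ_pos hn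
    rw [H_succ, Rat.cast_add_of_ne_zero (H_mem_pIntegral (by omega))
      (Rat.inv_natCast_mem_pIntegral hn'), ih (by omega), Rat.cast_inv_nat, harmonicIn_succ,
      Nat.cast_add_one]

end Transfer

theorem stmt1_general (p k : ℕ) (hp : p.Prime) (hp3 : 3 ≤ p) (hk2 : k ≤ (p - 1) / 2) :
    ratCongr p (H ((p - 1) / 2 - k))
      (-2 * ((2 ^ (p - 1) - 1 : ℚ) / p) + 2 * H (2 * k) - H k) := by
  have := Fact.mk hp
  obtain ⟨m, hm⟩ : ∃ m, 2 * m + 1 = p :=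
    ⟨(p - 1) / 2, by have := hp.odd_of_ne_two (by omega); grind⟩
  rw [show (p - 1) / 2 = m by omega] at hk2 ⊢
  have hH {n : ℕ} (hn : n ≤ 2 * m) : H n ∈ Rat.pIntegral p := H_mem_pIntegral (by omega)
  have hrhs : -2 * ((2 ^ (p - 1) - 1 : ℚ) / p) + 2 * H (2 * k) - H k =
      ((-(∑ j ∈ Ioo 0 p, p.choose j / p : ℕ) + 2 * ⟨H (2 * k), hH (by omega)⟩
        - ⟨H k, hH (by omega)⟩ : Rat.pIntegral p) : ℚ) := by
    rw [two_pow_pred_sub_one_div_eq hp]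
    push_cast [show ((2 : Rat.pIntegral p) : ℚ) = 2 from rfl]
    ring
  rw [hrhs]
  apply ratCongr_of_pIntegralToZMod_eq (x := ⟨H (m - k), hH (by omega)⟩)
  simp only [map_sub, map_add, map_mul, map_neg, map_natCast, map_ofNat,
    Rat.pIntegralToZMod_apply]
  rw [cast_H (by omega), cast_H (by omega), cast_H (by omega), Nat.cast_sum,
    sum_cast_choose_div_eq_altHarmonicIn, show p - 1 = 2 * m by omega]
  exact harmonicIn_half_sub hm hk2

theorem stmt1 (p k : ℕ) (hp : p.Prime) (hp3 : 3 ≤ p) (hk1 : 1 ≤ k) (hk2 : k ≤ (p - 1) / 2) :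
    ratCongr p (H ((p - 1) / 2 - k))
      (-2 * ((2 ^ (p - 1) - 1 : ℚ) / p) + 2 * H (2 * k) - H k) :=
  stmt1_general p k hp hp3 hk2
end

section
/- For any prime p ≥ 5 with p ≡ 1 (mod 3), the sum ∑_{k=0}^{(p-4)/3} 1/(3k+2) ≡ 0 (mod p). -/
/-! Pairing `3k + 2` with `p - (3k + 2) = 3(N - 1 - k) + 2` gives
`2 S = p ∑ 1 / ((3k + 2)(p - 3k - 2))`, and no denominator of the last sum is divisible by `p`
because both factors lie strictly between `0` and `p`. -/

open Finset

namespace Rat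

variable {p : ℕ}

lemma not_dvd_den_add (hp : p.Prime) {x y : ℚ} (hx : ¬ p ∣ x.den) (hy : ¬ p ∣ y.den) :
    ¬ p ∣ (x + y).den :=
  fun h => (hp.dvd_mul.mp (h.trans (add_den_dvd x y))).elim hx hy

lemma not_dvd_den_mul (hp : p.Prime) {x y : ℚ} (hx : ¬ p ∣ x.den) (hy : ¬ p ∣ y.den) :
    ¬ p ∣ (x * y).den :=
  fun h => (hp.dvd_mul.mp (h.trans (mul_den_dvd x y))).elim hx hy

lemma not_dvd_den_sum {ι : Type*} (hp : p.Prime) (s : Finset ι) (f : ι → ℚ)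
    (hf : ∀ i ∈ s, ¬ p ∣ (f i).den) : ¬ p ∣ (∑ i ∈ s, f i).den :=
  sum_induction f (fun x : ℚ => ¬ p ∣ x.den) (fun _ _ => not_dvd_den_add hp)
    (by simpa using hp.ne_one) hf

lemma not_dvd_den_inv_natCast {n : ℕ} (hn : ¬ p ∣ n) : ¬ p ∣ ((n : ℚ)⁻¹).den := by
  rw [inv_natCast_den]
  split_ifs with h
  · exact fun h' => hn (h ▸ dvd_zero p)
  · exact hn

end Rat

lemma two_mul_sum_inv_eq_of_add_reflect_eq {N p : ℕ} (a : ℕ → ℕ) (ha0 : ∀ k < N, 0 < a k)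
    (ha : ∀ k < N, a k + a (N - 1 - k) = p) :
    2 * ∑ k ∈ range N, (a k : ℚ)⁻¹ = p * ∑ k ∈ range N, ((a k * a (N - 1 - k) : ℕ) : ℚ)⁻¹ := by
  rw [two_mul]
  nth_rewrite 2 [← sum_range_reflect]
  rw [← sum_add_distrib, mul_sum]
  refine sum_congr rfl fun k hk => ?_
  have hk : k < N := mem_range.mp hk
  have hpos : (0 : ℚ) < a k := by exact_mod_cast ha0 k hk
  have hpos' : (0 : ℚ) < a (N - 1 - k) := by exact_mod_cast ha0 (N - 1 - k) (by omega)
  have hsum : (p : ℚ) = a k + a (N - 1 - k) := by exact_mod_cast (ha k hk).symm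
  rw [hsum]
  push_cast
  field_simp
  ring

theorem stmt2 (p : ℕ) (hp : p.Prime) (hp5 : 5 ≤ p) (h1 : p % 3 = 1) :
    ratCongr p (∑ k ∈ Finset.range ((p - 4) / 3 + 1), (1 : ℚ) / (3 * k + 2)) 0 := by
  set N := (p - 4) / 3 + 1
  set a : ℕ → ℕ := fun k => 3 * k + 2
  have hreflect : ∀ k < N, a k + a (N - 1 - k) = p := fun k hk => by simp only [a]; omega
  have hsum := two_mul_sum_inv_eq_of_add_reflect_eq a (fun k _ => by positivity) hreflect
  set T := ∑ k ∈ range N, ((a k * a (N - 1 - k) : ℕ) : ℚ)⁻¹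
  have hT : ¬ p ∣ T.den := Rat.not_dvd_den_sum hp _ _ fun k hk => by
    have hk : k < N := mem_range.mp hk
    refine Rat.not_dvd_den_inv_natCast fun h => ?_
    rcases hp.dvd_mul.mp h with h | h <;> exact Nat.not_dvd_of_pos_of_lt (by positivity) (by simp only [a]; omega) h
  refine ⟨T * ((2 : ℕ) : ℚ)⁻¹, ?_, ?_⟩
  · exact_mod_cast Rat.not_dvd_den_mul hp hT
      (Rat.not_dvd_den_inv_natCast (Nat.not_dvd_of_pos_of_lt two_pos (by omega)))
  · simp only [a, one_div] at hsum ⊢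
    push_cast at hsum ⊢
    linarith
end

section
/- For any prime p ≥ 5 with p ≡ 1 (mod 3), the sum ∑_{k=0}^{(p-4)/3} 1/(3k+1) ≡ q_3/2 (mod p), where q_3 = (3^{p-1}-1)/p is the Fermat quotient of 3. -/
/-!
Write `p = 6n + 1`. Since `p ≡ 1 (mod 3)`, Hensel's lemma gives a root `ω ∈ ℤ_[p]` of
`X² + X + 1`, and `(1 - ω)² = -3ω` yields `(1 - ω) ^ p - (-ω) ^ p - 1 = (1 - ω) ((-3) ^ (3n) - 1)`.
Reducing modulo `p` shows `(-3) ^ (3n) = 1 + pτ` with `τ ∈ ℤ`, and squaring gives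
`q_3 = 2τ + pτ² ≡ 2τ (mod p)`. On the other hand, by the binomial theorem and
`C(p, k) / p ≡ (-1) ^ (k - 1) / k (mod p)`, the left side is `-p ∑_{0<k<p} ω ^ k / k` modulo `p²`,
so `∑_{0<k<p} ω ^ k / k ≡ (ω - 1) τ (mod p)`; likewise for `ω²`, while for `ω = 1` the sum
vanishes. Filtering the classes `k ≡ 1 (mod 3)` with the weights
`1 + ω ^ (k - 1) + ω ^ (2 (k - 1))` gives `3 ∑ 1 / (3j + 1) ≡ 3τ (mod p)`.
-/

open Finset Polynomial

section Binomial

variable {p : ℕ} [hp : Fact p.Prime]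

theorem ZMod.natCast_choose_sub_one_eq_neg_one_pow {k : ℕ} (hk : k < p) :
    (((p - 1).choose k : ℕ) : ZMod p) = (-1) ^ k := by
  induction k with
  | zero => simp
  | succ k ih =>
    have hpascal := Nat.choose_succ_succ' (p - 1) k
    rw [Nat.sub_add_cancel hp.out.one_le] at hpascal
    have hdvd : ((p.choose (k + 1) : ℕ) : ZMod p) = 0 :=
      (ZMod.natCast_eq_zero_iff _ _).2 (hp.out.dvd_choose_self k.succ_ne_zero hk)
    rw [hpascal, Nat.cast_add, ih (by omega)] at hdvd
    rw [pow_succ]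
    linear_combination hdvd

theorem ZMod.natCast_choose_div_self {k : ℕ} (hk0 : 0 < k) (hk : k < p) :
    ((p.choose k / p : ℕ) : ZMod p) = -(-1) ^ k / k := by
  have hk' : (k : ZMod p) ≠ 0 := by
    rw [Ne, ZMod.natCast_eq_zero_iff]
    exact Nat.not_dvd_of_pos_of_lt hk0 hk
  obtain ⟨d, hd⟩ := hp.out.dvd_choose_self hk0.ne' hk
  have hmul : p * (p - 1).choose (k - 1) = p * (d * k) := by
    have := Nat.add_one_mul_choose_eq (p - 1) (k - 1)
    rwa [Nat.sub_add_cancel hp.out.one_le, Nat.sub_add_cancel hk0, hd, mul_assoc] at this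
  have hcast := congrArg (Nat.cast : ℕ → ZMod p) (Nat.eq_of_mul_eq_mul_left hp.out.pos hmul)
  rw [ZMod.natCast_choose_sub_one_eq_neg_one_pow (by omega), Nat.cast_mul] at hcast
  rw [hd, Nat.mul_div_cancel_left _ hp.out.pos, eq_div_iff hk', ← hcast,
    ← pow_sub_one_mul hk0.ne']
  ring

end Binomial

/-- The truncation of `-log (1 - x) = ∑ x ^ k / k` to the terms with `0 < k < p`. -/
def truncLog (p : ℕ) [Fact p.Prime] (x : ZMod p) : ZMod p :=
  ∑ i ∈ range (p - 1), x ^ (i + 1) / ((i + 1 : ℕ) : ZMod p)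

section TruncLog

variable {p : ℕ} [hp : Fact p.Prime]

theorem truncLog_map_eq {R : Type*} [CommRing R] [IsDomain R] [CharZero R]
    (f : R →+* ZMod p) {x c : R} (hc : (p : R) * c = (1 - x) ^ p - (-x) ^ p - 1) :
    truncLog p (f x) = -f c := by
  have hbinom := add_pow_prime_eq' hp.out (-x) 1
  rw [neg_add_eq_sub, one_pow] at hbinom
  have hc' : c = ∑ k ∈ Ioo 0 p, (-x) ^ k * 1 ^ (p - k) * ((p.choose k / p : ℕ) : R) :=
    mul_left_cancel₀ (Nat.cast_ne_zero.2 hp.out.ne_zero) (by linear_combination hc + hbinom)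
  rw [hc', map_sum, ← Ico_add_one_left_eq_Ioo, sum_Ico_eq_sum_range, truncLog,
    ← sum_neg_distrib]
  refine sum_congr rfl fun i hi => ?_
  rw [mem_range] at hi
  rw [map_mul, map_mul, map_natCast, ZMod.natCast_choose_div_self (by omega) (by omega)]
  simp only [map_pow, map_neg, map_one, one_pow, mul_one, neg_pow (f x)]
  have hsq : ((-1 : ZMod p) ^ (1 + i)) ^ 2 = 1 := by
    rw [← pow_mul, mul_comm, pow_mul, neg_one_sq, one_pow]
  push_cast
  linear_combination (-(f x ^ (1 + i) / (1 + i))) * hsq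

theorem truncLog_one (hp2 : p ≠ 2) : truncLog p 1 = 0 := by
  have h := truncLog_map_eq (Int.castRingHom (ZMod p)) (x := 1) (c := 0) (by
    rw [(hp.out.odd_of_ne_two hp2).neg_pow]
    simp [zero_pow hp.out.ne_zero])
  simpa using h

end TruncLog

section CubeRoot

variable {R : Type*} [CommRing R] {ω : R} (hω : ω ^ 2 + ω + 1 = 0)
include hω

theorem pow_three_eq_one_of_sq_add_self_add_one_eq_zero : ω ^ 3 = 1 := by
  linear_combination (ω - 1) * hω

theorem sq_sq_add_sq_add_one_eq_zero : (ω ^ 2) ^ 2 + ω ^ 2 + 1 = 0 := by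
  linear_combination (ω ^ 2 - ω + 1) * hω

theorem one_sub_pow_sub_neg_pow_sub_one (n : ℕ) :
    (1 - ω) ^ (6 * n + 1) - (-ω) ^ (6 * n + 1) - 1 = (1 - ω) * ((-3) ^ (3 * n) - 1) := by
  have h3n : ω ^ (3 * n) = 1 := by
    rw [pow_mul, pow_three_eq_one_of_sq_add_self_add_one_eq_zero hω, one_pow]
  have hneg : (-ω) ^ (6 * n) = 1 := by
    rw [show 6 * n = 2 * (3 * n) by ring, pow_mul, neg_sq, ← pow_mul, mul_comm, pow_mul, h3n,
      one_pow]
  have hsub : (1 - ω) ^ (6 * n) = (-3) ^ (3 * n) := by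
    rw [show 6 * n = 2 * (3 * n) by ring, pow_mul, show (1 - ω) ^ 2 = -3 * ω by
      linear_combination hω, mul_pow, h3n, mul_one]
  rw [pow_succ, pow_succ, hneg, hsub]
  ring

theorem sum_range_three_mul_cube_root_filter (f : ℕ → R) (m : ℕ) :
    ∑ i ∈ range (3 * m), (1 + ω ^ i + ω ^ (2 * i)) * f i = 3 * ∑ j ∈ range m, f (3 * j) := by
  induction m with
  | zero => simp
  | succ m ih =>
    rw [show 3 * (m + 1) = 3 * m + 1 + 1 + 1 by ring, sum_range_succ, sum_range_succ,
      sum_range_succ, ih, sum_range_succ]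
    have hmod : ∀ i, ω ^ i = ω ^ (i % 3) :=
      fun i => pow_eq_pow_mod i (pow_three_eq_one_of_sq_add_self_add_one_eq_zero hω)
    rw [hmod (3 * m), hmod (2 * (3 * m)), hmod (3 * m + 1), hmod (2 * (3 * m + 1)),
      hmod (3 * m + 1 + 1), hmod (2 * (3 * m + 1 + 1)), show 3 * m % 3 = 0 by omega,
      show 2 * (3 * m) % 3 = 0 by omega, show (3 * m + 1) % 3 = 1 by omega,
      show 2 * (3 * m + 1) % 3 = 2 by omega, show (3 * m + 1 + 1) % 3 = 2 by omega,
      show 2 * (3 * m + 1 + 1) % 3 = 1 by omega]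
    linear_combination (f (3 * m + 1) + f (3 * m + 1 + 1)) * hω

end CubeRoot

section CubeRootModP

variable {p : ℕ} [hp : Fact p.Prime]

theorem ZMod.three_ne_zero (h : p ≠ 3) : (3 : ZMod p) ≠ 0 := by
  have : ((3 : ℕ) : ZMod p) ≠ 0 := by
    rw [Ne, ZMod.natCast_eq_zero_iff, Nat.prime_dvd_prime_iff_eq hp.out Nat.prime_three]
    exact h
  exact_mod_cast this

theorem ZMod.exists_sq_add_self_add_one_eq_zero (h : p % 3 = 1) :
    ∃ w : ZMod p, w ^ 2 + w + 1 = 0 := by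
  obtain ⟨g, hg⟩ :=
    exists_prime_orderOf_dvd_card (G := (ZMod p)ˣ) 3 (by rw [ZMod.card_units]; omega)
  have hg3 : (g : ZMod p) ^ 3 = 1 := by
    rw [← Units.val_pow_eq_pow_val, ← hg, pow_orderOf_eq_one, Units.val_one]
  have hg1 : (g : ZMod p) - 1 ≠ 0 := by
    rw [sub_ne_zero, Ne, Units.val_eq_one]
    rintro rfl
    simp at hg
  refine ⟨g, (mul_eq_zero.1 ?_).resolve_left hg1⟩
  linear_combination hg3

theorem ZMod.neg_three_pow_eq_one {n : ℕ} (hpn : p = 6 * n + 1) {w : ZMod p}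
    (hw : w ^ 2 + w + 1 = 0) : (-3 : ZMod p) ^ (3 * n) = 1 := by
  have hfrob := one_sub_pow_sub_neg_pow_sub_one hw n
  rw [← hpn, ZMod.pow_card, ZMod.pow_card] at hfrob
  have hw1 : 1 - w ≠ 0 := fun h => ZMod.three_ne_zero (p := p) (by omega) <| by
    linear_combination hw + (w + 2) * h
  exact sub_eq_zero.1 ((mul_eq_zero.1 (by linear_combination -hfrob)).resolve_left hw1)

theorem exists_neg_three_pow_eq_one_add_mul {n : ℕ} (hpn : p = 6 * n + 1) :
    ∃ τ : ℤ, (-3 : ℤ) ^ (3 * n) = 1 + p * τ := by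
  obtain ⟨w, hw⟩ := ZMod.exists_sq_add_self_add_one_eq_zero (p := p) (by omega)
  obtain ⟨τ, hτ⟩ : (p : ℤ) ∣ (-3) ^ (3 * n) - 1 := by
    rw [← ZMod.intCast_zmod_eq_zero_iff_dvd]
    push_cast
    rw [ZMod.neg_three_pow_eq_one hpn hw, sub_self]
  exact ⟨τ, by linarith⟩

theorem PadicInt.norm_lt_one_iff_toZMod_eq_zero {x : ℤ_[p]} : ‖x‖ < 1 ↔ toZMod x = 0 := by
  rw [← RingHom.mem_ker, ker_toZMod, IsLocalRing.mem_maximalIdeal, mem_nonunits]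

theorem PadicInt.exists_sq_add_self_add_one_eq_zero (h : p % 3 = 1) :
    ∃ ω : ℤ_[p], ω ^ 2 + ω + 1 = 0 := by
  obtain ⟨w, hw⟩ := ZMod.exists_sq_add_self_add_one_eq_zero h
  set F : ℤ[X] := X ^ 2 + X + 1
  set a : ℤ_[p] := (w.val : ℤ_[p])
  have ha : toZMod a = w := by simp [a]
  have hFa : ‖F.aeval a‖ < 1 := by
    rw [norm_lt_one_iff_toZMod_eq_zero]
    simp [F, ha, hw]
  have hF'a : ‖F.derivative.aeval a‖ = 1 := by
    refine le_antisymm (norm_le_one _) (not_lt.1 fun hlt => ZMod.three_ne_zero (p := p)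
      (by omega) ?_)
    rw [norm_lt_one_iff_toZMod_eq_zero] at hlt
    simp [F, ha, map_ofNat] at hlt
    linear_combination 4 * hw - (2 * w + 1) * hlt
  obtain ⟨ω, hω, -⟩ := hensels_lemma (F := F) (a := a) (by rwa [hF'a, one_pow])
  exact ⟨ω, by simpa [F] using hω⟩

theorem truncLog_toZMod_eq {n : ℕ} (hpn : p = 6 * n + 1) {τ : ℤ}
    (hτ : (-3 : ℤ) ^ (3 * n) = 1 + p * τ) {ω : ℤ_[p]} (hω : ω ^ 2 + ω + 1 = 0) :
    truncLog p (PadicInt.toZMod ω) = (PadicInt.toZMod ω - 1) * τ := by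
  rw [truncLog_map_eq PadicInt.toZMod (c := (1 - ω) * (τ : ℤ_[p]))]
  · simp only [map_mul, map_sub, map_one, map_intCast]
    ring
  · have hroot := one_sub_pow_sub_neg_pow_sub_one hω n
    rw [← hpn] at hroot
    have hτ' := congrArg (Int.cast : ℤ → ℤ_[p]) hτ
    push_cast at hτ'
    linear_combination -hroot - (1 - ω) * hτ'

theorem three_mul_sum_inv_three_mul_add_one_eq_truncLog {n : ℕ} (hpn : p = 6 * n + 1)
    {w : ZMod p} (hw : w ^ 2 + w + 1 = 0) :
    3 * ∑ j ∈ range (2 * n), ((3 * j + 1 : ℕ) : ZMod p)⁻¹ =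
      truncLog p 1 + w ^ 2 * truncLog p w + w * truncLog p (w ^ 2) := by
  have h3 := pow_three_eq_one_of_sq_add_self_add_one_eq_zero hw
  rw [← sum_range_three_mul_cube_root_filter hw (fun i => ((i + 1 : ℕ) : ZMod p)⁻¹), truncLog,
    truncLog, truncLog, mul_sum, mul_sum, ← sum_add_distrib, ← sum_add_distrib,
    show p - 1 = 3 * (2 * n) by omega]
  refine sum_congr rfl fun i _ => ?_
  have e1 : w ^ 2 * w ^ (i + 1) = w ^ i := by
    rw [← pow_add, show 2 + (i + 1) = i + 3 by ring, pow_add, h3, mul_one]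
  have e2 : w * (w ^ 2) ^ (i + 1) = w ^ (2 * i) := by
    rw [← pow_mul, ← pow_succ', show 2 * (i + 1) + 1 = 2 * i + 3 by ring, pow_add, h3, mul_one]
  simp only [one_pow, div_eq_mul_inv]
  linear_combination ((i + 1 : ℕ) : ZMod p)⁻¹ * (-e1 - e2)

theorem sum_inv_three_mul_add_one_eq {n : ℕ} (hpn : p = 6 * n + 1) {τ : ℤ}
    (hτ : (-3 : ℤ) ^ (3 * n) = 1 + p * τ) :
    ∑ j ∈ range (2 * n), ((3 * j + 1 : ℕ) : ZMod p)⁻¹ = τ := by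
  obtain ⟨ω, hω⟩ := PadicInt.exists_sq_add_self_add_one_eq_zero (p := p) (by omega)
  set w := PadicInt.toZMod ω
  have hw : w ^ 2 + w + 1 = 0 := by simpa using congrArg PadicInt.toZMod hω
  have hsum := three_mul_sum_inv_three_mul_add_one_eq_truncLog hpn hw
  rw [truncLog_one (by omega), truncLog_toZMod_eq hpn hτ hω, ← map_pow,
    truncLog_toZMod_eq hpn hτ (sq_sq_add_sq_add_one_eq_zero hω), map_pow] at hsum
  refine mul_left_cancel₀ (ZMod.three_ne_zero (p := p) (by omega)) ?_
  linear_combination hsum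
    + (2 * τ : ZMod p) * pow_three_eq_one_of_sq_add_self_add_one_eq_zero hw - τ * hw

end CubeRootModP

namespace Rat

variable (p : ℕ) [hp : Fact p.Prime]

theorem mem_padicValuation_integer_iff {x : ℚ} :
    x ∈ (padicValuation p).integer ↔ ¬ p ∣ x.den :=
  (Valuation.mem_integer_iff _ _).trans padicValuation_le_one_iff

theorem inv_natCast_mem_padicValuation_integer {k : ℕ} (hk : ¬ p ∣ k) :
    (k : ℚ)⁻¹ ∈ (padicValuation p).integer := by
  rw [mem_padicValuation_integer_iff, inv_natCast_den]
  split_ifs <;> simp_all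

theorem natCast_den_ne_zero_of_mem_padicValuation_integer {x : ℚ}
    (hx : x ∈ (padicValuation p).integer) : (x.den : ZMod p) ≠ 0 := by
  rw [Ne, ZMod.natCast_eq_zero_iff]
  exact (mem_padicValuation_integer_iff p).1 hx

noncomputable def padicReduction : (padicValuation p).integer →+* ZMod p where
  toFun x := ((x : ℚ) : ZMod p)
  map_one' := cast_one
  map_mul' x y := cast_mul_of_ne_zero (natCast_den_ne_zero_of_mem_padicValuation_integer p x.2)
    (natCast_den_ne_zero_of_mem_padicValuation_integer p y.2)
  map_zero' := cast_zero
  map_add' x y := cast_add_of_ne_zero (natCast_den_ne_zero_of_mem_padicValuation_integer p x.2)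
    (natCast_den_ne_zero_of_mem_padicValuation_integer p y.2)

theorem padicReduction_apply (x : (padicValuation p).integer) :
    padicReduction p x = ((x : ℚ) : ZMod p) :=
  rfl

theorem padicReduction_inv_natCast {k : ℕ} (hk : ¬ p ∣ k) :
    padicReduction p ⟨(k : ℚ)⁻¹, inv_natCast_mem_padicValuation_integer p hk⟩ =
      (k : ZMod p)⁻¹ := by
  rw [padicReduction_apply, cast_inv_of_ne_zero, cast_natCast]
  rwa [num_natCast, Int.cast_natCast, Ne, ZMod.natCast_eq_zero_iff]

theorem div_mem_padicValuation_integer_of_padicReduction_eq_zero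
    {x : (padicValuation p).integer} (hx : padicReduction p x = 0) :
    (x : ℚ) / p ∈ (padicValuation p).integer := by
  rw [padicReduction_apply, cast_def, div_eq_zero_iff] at hx
  obtain ⟨a, ha⟩ := (ZMod.intCast_zmod_eq_zero_iff_dvd _ _).1
    (hx.resolve_right (natCast_den_ne_zero_of_mem_padicValuation_integer p x.2))
  have hx' : (x : ℚ) / p = a * ((x : ℚ).den : ℚ)⁻¹ := by
    conv_lhs => rw [← num_div_den (x : ℚ), ha]
    push_cast
    field_simp [hp.out.ne_zero]
  rw [hx']
  exact mul_mem (intCast_mem _ a) (inv_natCast_mem_padicValuation_integer p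
    ((mem_padicValuation_integer_iff p).1 x.2))

end Rat

theorem ratCongr_of_sub_div_mem_padicValuation_integer {p : ℕ} [hp : Fact p.Prime] {x y : ℚ}
    (h : (x - y) / p ∈ (Rat.padicValuation p).integer) : ratCongr p x y := by
  refine ⟨(x - y) / p, ?_, ?_⟩
  · exact_mod_cast (Rat.mem_padicValuation_integer_iff p).1 h
  · field_simp [hp.out.ne_zero]

theorem three_pow_sub_one_div_div_two_eq {p n : ℕ} (hpn : p = 6 * n + 1) {τ : ℤ}
    (hτ : (-3 : ℤ) ^ (3 * n) = 1 + p * τ) :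
    ((3 ^ (p - 1) - 1 : ℚ) / p) / 2 = τ + p * τ ^ 2 / 2 := by
  have h3 : (3 : ℤ) ^ (p - 1) = (1 + p * τ) ^ 2 := by
    rw [← hτ, ← pow_mul, Even.neg_pow ⟨3 * n, by ring⟩ 3, show p - 1 = 3 * n * 2 by omega]
  have hp0 : (p : ℚ) ≠ 0 := by rw [hpn]; positivity
  rw [show (3 : ℚ) ^ (p - 1) = (1 + p * τ) ^ 2 by exact_mod_cast h3]
  field_simp
  ring

theorem sum_one_div_three_mul_add_one_sub_div_mem {p : ℕ} [Fact p.Prime] {n : ℕ}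
    (hpn : p = 6 * n + 1) {τ : ℤ} (hτ : (-3 : ℤ) ^ (3 * n) = 1 + p * τ) :
    (∑ k ∈ range (2 * n), (1 : ℚ) / (3 * k + 1) - τ) / p ∈ (Rat.padicValuation p).integer := by
  have hcoprime : ∀ j < 2 * n, ¬ p ∣ 3 * j + 1 := fun j hj h => by
    have := Nat.le_of_dvd (by omega) h
    omega
  let u : Fin (2 * n) → (Rat.padicValuation p).integer := fun j =>
    ⟨((3 * j + 1 : ℕ) : ℚ)⁻¹, Rat.inv_natCast_mem_padicValuation_integer p (hcoprime j j.2)⟩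
  have hu : Rat.padicReduction p (∑ j, u j - τ) = 0 := by
    rw [map_sub, map_sum, map_intCast, ← sum_inv_three_mul_add_one_eq hpn hτ, sum_range,
      sub_eq_zero]
    exact sum_congr rfl fun j _ => Rat.padicReduction_inv_natCast p (hcoprime j j.2)
  have hu' : ((∑ j, u j - τ : (Rat.padicValuation p).integer) : ℚ) =
      ∑ k ∈ range (2 * n), (1 : ℚ) / (3 * k + 1) - τ := by
    push_cast [u]
    rw [sum_range]
    simp
  rw [← hu']
  exact Rat.div_mem_padicValuation_integer_of_padicReduction_eq_zero p hu

theorem stmt3_general (p : ℕ) (hp : p.Prime) (h1 : p % 3 = 1) :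
    ratCongr p (∑ k ∈ Finset.range ((p - 4) / 3 + 1), (1 : ℚ) / (3 * k + 1))
      (((3 ^ (p - 1) - 1 : ℚ) / p) / 2) := by
  have : Fact p.Prime := ⟨hp⟩
  have hp2 := hp.two_le
  obtain ⟨n, hpn⟩ : ∃ n, p = 6 * n + 1 :=
    ⟨p / 6, by have := hp.mod_two_eq_one_iff_ne_two.2 (by omega); omega⟩
  obtain ⟨τ, hτ⟩ := exists_neg_three_pow_eq_one_add_mul hpn
  have h2 : ¬ p ∣ 2 := fun h => by
    have := Nat.le_of_dvd (by omega) h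
    omega
  rw [show (p - 4) / 3 + 1 = 2 * n by omega, three_pow_sub_one_div_div_two_eq hpn hτ]
  apply ratCongr_of_sub_div_mem_padicValuation_integer
  convert sub_mem (sum_one_div_three_mul_add_one_sub_div_mem hpn hτ)
    (mul_mem (pow_mem (intCast_mem _ τ) 2) (Rat.inv_natCast_mem_padicValuation_integer p h2))
    using 1
  field_simp
  ring

theorem stmt3 (p : ℕ) (hp : p.Prime) (hp5 : 5 ≤ p) (h1 : p % 3 = 1) :
    ratCongr p (∑ k ∈ Finset.range ((p - 4) / 3 + 1), (1 : ℚ) / (3 * k + 1))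
      (((3 ^ (p - 1) - 1 : ℚ) / p) / 2) :=
  stmt3_general p hp h1
end

section
/- For any prime p ≥ 5 with p ≡ 2 (mod 3), the sum ∑_{k=0}^{(p-5)/3} 1/(3k+1) ≡ 1 (mod p). -/
/-!
Write `p = 3n + 5`. After removing the term `k = 0`, the sum runs over `1/(3i + 4)` for
`i < n`, and the terms `i` and `n - 1 - i` have denominators adding up to `3n + 5 = p`.
Pairing them, `1/a + 1/b = (a + b)/(ab) = p/(ab)` with `0 < a, b < p`, so `2 (S - 1)` is `p`
times a rational whose denominator is prime to `p`; as `p` is odd, so is `S - 1`.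
-/

open Finset

/-- The localization `ℤ_(p)`, as a subring of `ℚ`. -/
def Rat.denNotDvdSubring (p : ℕ) (hp : p.Prime) : Subring ℚ where
  carrier := {q | ¬ p ∣ q.den}
  mul_mem' {a b} ha hb h :=
    (hp.dvd_mul.mp (h.trans (Rat.mul_den_dvd a b))).elim ha hb
  add_mem' {a b} ha hb h :=
    (hp.dvd_mul.mp (h.trans (Rat.add_den_dvd a b))).elim ha hb
  one_mem' := by simpa using hp.ne_one
  zero_mem' := by simpa using hp.ne_one
  neg_mem' := by simp

theorem Rat.inv_natCast_mem_denNotDvdSubring {p : ℕ} (hp : p.Prime) {k : ℕ} (hk : ¬ p ∣ k) :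
    (k : ℚ)⁻¹ ∈ Rat.denNotDvdSubring p hp := by
  have hk0 : k ≠ 0 := by rintro rfl; exact hk (dvd_zero p)
  change ¬ p ∣ (k : ℚ)⁻¹.den
  rwa [Rat.inv_natCast_den, if_neg hk0]

theorem ratCongr_of_sub_eq_mul {p : ℕ} (hp : p.Prime) {x y r : ℚ}
    (hr : r ∈ Rat.denNotDvdSubring p hp) (h : x - y = p * r) : ratCongr p x y :=
  ⟨r, by exact_mod_cast hr, h⟩

theorem two_mul_sum_inv_eq_mul_sum_inv_mul_reflect {K : Type*} [Field K] (f : ℕ → K) (n : ℕ)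
    (c : K) (hf : ∀ i < n, f i ≠ 0) (hc : ∀ i < n, f i + f (n - 1 - i) = c) :
    2 * ∑ i ∈ range n, (f i)⁻¹ = c * ∑ i ∈ range n, (f i * f (n - 1 - i))⁻¹ := by
  rw [two_mul]
  nth_rewrite 2 [← sum_range_reflect]
  rw [← sum_add_distrib, mul_sum]
  refine sum_congr rfl fun i hi => ?_
  have hi : i < n := mem_range.mp hi
  rw [inv_add_inv (hf i hi) (hf _ (by omega)), hc i hi, div_eq_mul_inv]

theorem stmt4 (p : ℕ) (hp : p.Prime) (hp5 : 5 ≤ p) (h2 : p % 3 = 2) :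
    ratCongr p (∑ k ∈ Finset.range ((p - 5) / 3 + 1), (1 : ℚ) / (3 * k + 1)) 1 := by
  obtain ⟨n, rfl⟩ : ∃ n, p = 3 * n + 5 := ⟨(p - 5) / 3, by omega⟩
  have hn : (3 * n + 5 - 5) / 3 = n := by omega
  set f : ℕ → ℚ := fun i => ((3 * i + 4 : ℕ) : ℚ)
  have hpair := two_mul_sum_inv_eq_mul_sum_inv_mul_reflect f n (3 * n + 5 : ℕ)
    (fun i _ => by positivity) (fun i hi => by simp only [f]; rw [← Nat.cast_add]; congr 1; omega)
  have hnot_dvd : ∀ i < n, ¬ 3 * n + 5 ∣ 3 * i + 4 := fun i hi =>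
    Nat.not_dvd_of_pos_of_lt (by omega) (by omega)
  have hmem : (∑ i ∈ range n, (f i * f (n - 1 - i))⁻¹) * ((2 : ℕ) : ℚ)⁻¹ ∈
      Rat.denNotDvdSubring _ hp := by
    refine Subring.mul_mem _ (Subring.sum_mem _ fun i hi => ?_)
      (Rat.inv_natCast_mem_denNotDvdSubring hp (Nat.not_dvd_of_pos_of_lt two_pos (by omega)))
    have hi : i < n := mem_range.mp hi
    rw [mul_inv]
    exact Subring.mul_mem _ (Rat.inv_natCast_mem_denNotDvdSubring hp (hnot_dvd i hi))
      (Rat.inv_natCast_mem_denNotDvdSubring hp (hnot_dvd _ (by omega)))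
  refine ratCongr_of_sub_eq_mul hp hmem ?_
  rw [hn, sum_range_succ', ← mul_assoc, ← hpair]
  simp only [f]
  push_cast
  field_simp
  ring_nf
end

section
/- For any prime p ≥ 5 with p ≡ 1 (mod 6), the sum ∑_{k=0}^{(p-1)/6} 1/(2k+1) ≡ q_2 - (3/4) q_3 + 3/2 (mod p), where q_a = (a^{p-1}-1)/p. -/
open Finset

namespace Rat

variable {K : Type*} [Field K]

lemma cast_den_ne_zero_of_dvd {q : ℚ} {d : ℕ} (hq : q.den ∣ d) (hd : (d : K) ≠ 0) :
    (q.den : K) ≠ 0 := by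
  obtain ⟨e, rfl⟩ := hq
  rw [Nat.cast_mul] at hd
  exact left_ne_zero_of_mul hd

lemma cast_den_sub_ne_zero {q r : ℚ} (hq : (q.den : K) ≠ 0) (hr : (r.den : K) ≠ 0) :
    ((q - r).den : K) ≠ 0 :=
  cast_den_ne_zero_of_dvd (sub_den_dvd q r) (by push_cast; exact mul_ne_zero hq hr)

lemma cast_den_sum_ne_zero {ι : Type*} {s : Finset ι} {f : ι → ℚ}
    (hf : ∀ i ∈ s, ((f i).den : K) ≠ 0) : ((∑ i ∈ s, f i).den : K) ≠ 0 :=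
  cast_den_ne_zero_of_dvd (Finset.Rat.den_sum_dvd_prod_den s f)
    (by push_cast; exact prod_ne_zero_iff.2 hf)

lemma cast_sum_of_cast_den_ne_zero {ι : Type*} {s : Finset ι} {f : ι → ℚ}
    (hf : ∀ i ∈ s, ((f i).den : K) ≠ 0) : ((∑ i ∈ s, f i : ℚ) : K) = ∑ i ∈ s, (f i : K) := by
  induction s using Finset.cons_induction with
  | empty => simp
  | cons i s hi ih =>
    rw [forall_mem_cons] at hf
    rw [sum_cons, sum_cons, cast_add_of_ne_zero hf.1 (cast_den_sum_ne_zero hf.2),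
      ih hf.2]

lemma cast_den_intCast_div_ne_zero (z : ℤ) {b : ℕ} (hb : (b : K) ≠ 0) :
    (((z : ℚ) / b).den : K) ≠ 0 :=
  cast_den_ne_zero_of_dvd (by exact_mod_cast divInt_eq_div z b ▸ den_dvd z b) hb

lemma cast_intCast_div_natCast (z : ℤ) {b : ℕ} (hb : (b : K) ≠ 0) :
    (((z : ℚ) / b : ℚ) : K) = z / b := by
  rw [cast_div_of_ne_zero (by simp) (by simpa), cast_intCast, cast_natCast]

end Rat

lemma ratCongr_of_cast_eq {p : ℕ} [Fact p.Prime] {x y : ℚ} (hx : (x.den : ZMod p) ≠ 0)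
    (hy : (y.den : ZMod p) ≠ 0) (h : (x : ZMod p) = y) : ratCongr p x y := by
  have hden := Rat.cast_den_sub_ne_zero hx hy
  have hnum : (p : ℤ) ∣ (x - y).num := by
    rw [← ZMod.intCast_zmod_eq_zero_iff_dvd]
    have h' := Rat.cast_sub_of_ne_zero hx hy
    rw [h, sub_self, Rat.cast_def, div_eq_zero_iff] at h'
    exact h'.resolve_right hden
  obtain ⟨c, hc⟩ := hnum
  refine ⟨Rat.divInt c (x - y).den, fun hp => hden ?_, ?_⟩
  · rw [ZMod.natCast_eq_zero_iff, ← Int.natCast_dvd_natCast]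
    exact hp.trans (Rat.den_dvd _ _)
  · rw [Rat.divInt_eq_div]
    nth_rw 1 [← Rat.num_div_den (x - y)]
    rw [hc]
    push_cast
    ring

lemma Finset.prod_one_add_mul_of_mul_self_eq_zero {ι R : Type*} [CommRing R]
    {c : R} (hc : c * c = 0) (s : Finset ι) (f : ι → R) :
    ∏ i ∈ s, (1 + c * f i) = 1 + c * ∑ i ∈ s, f i := by
  induction s using Finset.cons_induction with
  | empty => simp
  | cons i s hi ih =>
    rw [prod_cons, sum_cons, ih]
    linear_combination (f i * ∑ j ∈ s, f j) * hc

lemma Finset.sum_Ioc_zero_mul_eq_sum_range {M : Type*} [AddCommMonoid M] (f : ℕ → M) (a m : ℕ) :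
    ∑ k ∈ Ioc 0 (a * m), f k = ∑ j ∈ range a, ∑ k ∈ Ioc (j * m) ((j + 1) * m), f k := by
  induction a with
  | zero => simp
  | succ a ih =>
    rw [sum_range_succ, ← ih, sum_Ioc_consecutive _ (Nat.zero_le _) (by nlinarith)]

lemma Finset.sum_range_natCast_mul_sub {R : Type*} [CommRing R] (f : ℕ → R) (a : ℕ) :
    ∑ j ∈ range a, (j : R) * (f (j + 1) - f j) = a * f a - ∑ j ∈ range a, f (j + 1) := by
  induction a with
  | zero => simp
  | succ a ih =>
    rw [sum_range_succ, ih, sum_range_succ]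
    push_cast
    ring

/-- Integer division, exact when `p` is a prime not dividing `a`. -/
def fermatQuotient (p a : ℕ) : ℤ := ((a : ℤ) ^ (p - 1) - 1) / p

def harmonicZMod (p m : ℕ) : ZMod p := ∑ k ∈ Ioc 0 m, (k : ZMod p)⁻¹

section

variable {p : ℕ}

lemma natCast_ne_zero_of_pos_of_lt {k : ℕ} (hk : 0 < k) (hkp : k < p) : (k : ZMod p) ≠ 0 := by
  rw [Ne, ZMod.natCast_eq_zero_iff]
  exact Nat.not_dvd_of_pos_of_lt hk hkp

lemma mem_Ioc_zero_sub_one_iff {k : ℕ} : k ∈ Ioc 0 (p - 1) ↔ k < p ∧ ¬ p ∣ k := by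
  constructor
  · intro hk
    rw [mem_Ioc] at hk
    exact ⟨by omega, fun h => by have := Nat.le_of_dvd hk.1 h; omega⟩
  · rintro ⟨hkp, hk⟩
    rw [mem_Ioc]
    exact ⟨Nat.pos_of_ne_zero fun h => hk (h ▸ dvd_zero p), by omega⟩

lemma harmonicZMod_succ (m : ℕ) :
    harmonicZMod p (m + 1) = harmonicZMod p m + ((m + 1 : ℕ) : ZMod p)⁻¹ :=
  sum_Ioc_succ_top (Nat.zero_le m) _

lemma sum_Ioc_inv_eq_harmonicZMod_sub {a b : ℕ} (hab : a ≤ b) :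
    ∑ k ∈ Ioc a b, (k : ZMod p)⁻¹ = harmonicZMod p b - harmonicZMod p a := by
  rw [eq_sub_iff_add_eq', harmonicZMod, harmonicZMod, sum_Ioc_consecutive _ (Nat.zero_le a) hab]

lemma ZMod.castHom_eq_zero_of_natCast_mul_eq_zero [NeZero p] {x : ZMod (p ^ 2)}
    (hx : (p : ZMod (p ^ 2)) * x = 0) :
    ZMod.castHom (dvd_pow_self p two_ne_zero) (ZMod p) x = 0 := by
  obtain ⟨v, rfl⟩ : ∃ v : ℕ, (v : ZMod (p ^ 2)) = x := ⟨x.val, ZMod.natCast_zmod_val x⟩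
  rw [← Nat.cast_mul, ZMod.natCast_eq_zero_iff, pow_two,
    Nat.mul_dvd_mul_iff_left (NeZero.pos p)] at hx
  rwa [map_natCast, ZMod.natCast_eq_zero_iff]

variable [hp : Fact p.Prime]

lemma two_ne_zero_of_ne_two (hp2 : p ≠ 2) : (2 : ZMod p) ≠ 0 := by
  exact_mod_cast natCast_ne_zero_of_pos_of_lt two_pos (lt_of_le_of_ne hp.out.two_le hp2.symm)

lemma sum_Ioc_inv_eq_neg_harmonicZMod {m : ℕ} (hm : m ≤ p - 1) :
    ∑ k ∈ Ioc m (p - 1), (k : ZMod p)⁻¹ = -harmonicZMod p (p - 1 - m) := by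
  rw [harmonicZMod, ← sum_neg_distrib]
  refine sum_nbij' (p - ·) (p - ·) ?_ ?_ ?_ ?_ ?_ <;> intro k hk <;> simp only [mem_Ioc] at hk
  · simp only [mem_Ioc]; omega
  · simp only [mem_Ioc]; omega
  · omega
  · omega
  · rw [Nat.cast_sub (by omega), ZMod.natCast_self, zero_sub, inv_neg, neg_neg]

lemma harmonicZMod_sub_one (hp2 : p ≠ 2) : harmonicZMod p (p - 1) = 0 := by
  have h := sum_Ioc_inv_eq_neg_harmonicZMod (p := p) (Nat.zero_le _)
  rw [Nat.sub_zero, ← harmonicZMod, eq_neg_iff_add_eq_zero, ← two_mul] at h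
  exact (mul_eq_zero.1 h).resolve_left (two_ne_zero_of_ne_two hp2)

lemma harmonicZMod_sub_one_sub (hp2 : p ≠ 2) {m : ℕ} (hm : m ≤ p - 1) :
    harmonicZMod p (p - 1 - m) = harmonicZMod p m := by
  have h := sum_Ioc_inv_eq_harmonicZMod_sub (p := p) hm
  rw [sum_Ioc_inv_eq_neg_harmonicZMod hm, harmonicZMod_sub_one hp2] at h
  linear_combination -h

lemma two_mul_sum_range_inv_two_mul_add_one (hp2 : p ≠ 2) (n : ℕ) :
    2 * ∑ k ∈ range (n + 1), ((2 * k + 1 : ℕ) : ZMod p)⁻¹ =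
      2 * harmonicZMod p (2 * n + 1) - harmonicZMod p n := by
  induction n with
  | zero => simp [harmonicZMod]
  | succ n ih =>
    have h2 : (2 : ZMod p) * ((2 * n + 1 + 1 : ℕ) : ZMod p)⁻¹ = ((n + 1 : ℕ) : ZMod p)⁻¹ := by
      rw [show 2 * n + 1 + 1 = 2 * (n + 1) by ring, Nat.cast_mul, mul_inv, ← mul_assoc,
        Nat.cast_two, mul_inv_cancel₀ (two_ne_zero_of_ne_two hp2), one_mul]
    rw [sum_range_succ, mul_add, ih, show 2 * (n + 1) + 1 = 2 * n + 1 + 1 + 1 by ring,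
      harmonicZMod_succ (2 * n + 1 + 1), harmonicZMod_succ (2 * n + 1), harmonicZMod_succ n]
    linear_combination -h2

lemma natCast_mul_fermatQuotient {a : ℕ} (ha : ¬ p ∣ a) :
    (p : ℤ) * fermatQuotient p a = (a : ℤ) ^ (p - 1) - 1 := by
  refine Int.mul_ediv_cancel' ?_
  rw [← ZMod.intCast_zmod_eq_zero_iff_dvd]
  push_cast
  rw [ZMod.pow_card_sub_one_eq_one (by rwa [Ne, ZMod.natCast_eq_zero_iff]), sub_self]

lemma fermatQuotient_eq_div {a : ℕ} (ha : ¬ p ∣ a) :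
    (fermatQuotient p a : ℚ) = ((a : ℚ) ^ (p - 1) - 1) / p := by
  rw [eq_div_iff (Nat.cast_ne_zero.2 hp.out.ne_zero), mul_comm]
  exact_mod_cast natCast_mul_fermatQuotient ha

lemma intCast_fermatQuotient_mul {a b : ℕ} (ha : ¬ p ∣ a) (hb : ¬ p ∣ b) :
    (fermatQuotient p (a * b) : ZMod p) = fermatQuotient p a + fermatQuotient p b := by
  have hab := natCast_mul_fermatQuotient (hp.out.not_dvd_mul ha hb)
  push_cast [mul_pow] at hab
  have h : fermatQuotient p (a * b) =
      fermatQuotient p a + fermatQuotient p b + p * fermatQuotient p a * fermatQuotient p b := by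
    refine mul_left_cancel₀ (Int.natCast_ne_zero.2 hp.out.ne_zero) ?_
    linear_combination hab - (p * fermatQuotient p b + 1) * natCast_mul_fermatQuotient ha
      - (a : ℤ) ^ (p - 1) * natCast_mul_fermatQuotient hb
  rw [h]
  push_cast
  rw [ZMod.natCast_self]
  ring

lemma mul_mod_mem_Ioc {a k : ℕ} (ha : ¬ p ∣ a) (hk : k ∈ Ioc 0 (p - 1)) :
    k * a % p ∈ Ioc 0 (p - 1) := by
  rw [mem_Ioc_zero_sub_one_iff] at hk ⊢
  exact ⟨Nat.mod_lt _ hp.out.pos,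
    fun h => hp.out.not_dvd_mul hk.2 ha ((Nat.dvd_mod_iff dvd_rfl).1 h)⟩

lemma prod_mul_mod_eq_prod {M : Type*} [CommMonoid M] {a : ℕ} (ha : ¬ p ∣ a) (g : ℕ → M) :
    ∏ k ∈ Ioc 0 (p - 1), g (k * a % p) = ∏ k ∈ Ioc 0 (p - 1), g k := by
  have ha' : (a : ZMod p) ≠ 0 := by rwa [Ne, ZMod.natCast_eq_zero_iff]
  set b := ((a : ZMod p)⁻¹).val
  have hb : ¬ p ∣ b := by
    rw [← ZMod.natCast_eq_zero_iff, ZMod.natCast_zmod_val]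
    exact inv_ne_zero ha'
  have hab : (a : ZMod p) * b = 1 := by rw [ZMod.natCast_zmod_val, mul_inv_cancel₀ ha']
  have cancel : ∀ {u v k : ℕ}, (u : ZMod p) * v = 1 → k ∈ Ioc 0 (p - 1) →
      k * u % p * v % p = k := by
    intro u v k huv hk
    rw [← ZMod.val_natCast, Nat.cast_mul, ZMod.natCast_mod, Nat.cast_mul, mul_assoc, huv, mul_one,
      ZMod.val_natCast, Nat.mod_eq_of_lt (mem_Ioc_zero_sub_one_iff.1 hk).1]
  exact prod_nbij' (· * a % p) (· * b % p) (fun k hk => mul_mod_mem_Ioc ha hk)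
    (fun k hk => mul_mod_mem_Ioc hb hk) (fun k hk => cancel hab hk)
    (fun k hk => cancel (by rw [mul_comm, hab]) hk) (fun _ _ => rfl)

lemma pow_sub_one_eq_one_add_sum {a : ℕ} (ha : ¬ p ∣ a) :
    (a : ZMod (p ^ 2)) ^ (p - 1) = 1 + p * ∑ k ∈ Ioc 0 (p - 1),
      ((k * a / p : ℕ) : ZMod (p ^ 2)) * ((k * a % p : ℕ) : ZMod (p ^ 2))⁻¹ := by
  have hinv : ∀ k ∈ Ioc 0 (p - 1), (k : ZMod (p ^ 2)) * (k : ZMod (p ^ 2))⁻¹ = 1 := fun k hk =>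
    ZMod.coe_mul_inv_eq_one k <| Nat.Coprime.pow_right 2 <|
      (hp.out.coprime_iff_not_dvd.2 (mem_Ioc_zero_sub_one_iff.1 hk).2).symm
  have hpp : (p : ZMod (p ^ 2)) * p = 0 := by rw [← Nat.cast_mul, ← pow_two, ZMod.natCast_self]
  have hfactor : ∀ k ∈ Ioc 0 (p - 1), ((k * a : ℕ) : ZMod (p ^ 2)) =
      ((k * a % p : ℕ) : ZMod (p ^ 2)) * (1 + p * (((k * a / p : ℕ) : ZMod (p ^ 2)) * ((k * a % p : ℕ) : ZMod (p ^ 2))⁻¹)) := by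
    intro k hk
    nth_rw 1 [← Nat.div_add_mod (k * a) p]
    push_cast
    linear_combination (-(p : ZMod (p ^ 2)) * ((k * a / p : ℕ) : ZMod (p ^ 2))) *
      hinv _ (mul_mod_mem_Ioc ha hk)
  have hprod : (∏ k ∈ Ioc 0 (p - 1), (k : ZMod (p ^ 2))) * (a : ZMod (p ^ 2)) ^ (p - 1) =
      (∏ k ∈ Ioc 0 (p - 1), (k : ZMod (p ^ 2))) * (1 + p * ∑ k ∈ Ioc 0 (p - 1),
      ((k * a / p : ℕ) : ZMod (p ^ 2)) * ((k * a % p : ℕ) : ZMod (p ^ 2))⁻¹) := by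
    calc _ = ∏ k ∈ Ioc 0 (p - 1), ((k * a : ℕ) : ZMod (p ^ 2)) := by
          simp only [Nat.cast_mul, prod_mul_distrib, prod_const, Nat.card_Ioc, Nat.sub_zero]
      _ = _ := by
          rw [prod_congr rfl hfactor, prod_mul_distrib, prod_one_add_mul_of_mul_self_eq_zero hpp,
            prod_mul_mod_eq_prod ha (fun k => (k : ZMod (p ^ 2)))]
  have hunit : IsUnit (∏ k ∈ Ioc 0 (p - 1), (k : ZMod (p ^ 2))) :=
    IsUnit.prod_iff.2 fun k hk => IsUnit.of_mul_eq_one _ (hinv k hk)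
  exact hunit.mul_left_cancel hprod

/-- Lerch's formula. -/
lemma natCast_mul_fermatQuotient_eq_sum {a : ℕ} (ha : ¬ p ∣ a) :
    (a : ZMod p) * fermatQuotient p a =
      ∑ k ∈ Ioc 0 (p - 1), ((k * a / p : ℕ) : ZMod p) * (k : ZMod p)⁻¹ := by
  set π := ZMod.castHom (dvd_pow_self p two_ne_zero) (ZMod p)
  have hq : (fermatQuotient p a : ZMod p) = π (∑ k ∈ Ioc 0 (p - 1),
      ((k * a / p : ℕ) : ZMod (p ^ 2)) * ((k * a % p : ℕ) : ZMod (p ^ 2))⁻¹) := by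
    have h := congrArg (Int.cast : ℤ → ZMod (p ^ 2)) (natCast_mul_fermatQuotient ha)
    push_cast at h
    rw [pow_sub_one_eq_one_add_sum ha, add_sub_cancel_left] at h
    rw [← map_intCast π, ← sub_eq_zero, ← map_sub]
    exact ZMod.castHom_eq_zero_of_natCast_mul_eq_zero (by rw [mul_sub, h, sub_self])
  have hinv : ∀ k ∈ Ioc 0 (p - 1),
      π ((k * a % p : ℕ) : ZMod (p ^ 2))⁻¹ = ((k * a : ℕ) : ZMod p)⁻¹ := by
    intro k hk
    refine eq_inv_of_mul_eq_one_right ?_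
    rw [← ZMod.natCast_mod, ← map_natCast π, ← map_mul, ZMod.coe_mul_inv_eq_one, map_one]
    exact Nat.Coprime.pow_right 2 <|
      (hp.out.coprime_iff_not_dvd.2 (mem_Ioc_zero_sub_one_iff.1 (mul_mod_mem_Ioc ha hk)).2).symm
  have ha' : (a : ZMod p) ≠ 0 := by rwa [Ne, ZMod.natCast_eq_zero_iff]
  rw [hq, map_sum, mul_sum]
  refine sum_congr rfl fun k hk => ?_
  rw [map_mul, map_natCast, hinv k hk, Nat.cast_mul, mul_inv]
  field_simp

lemma natCast_mul_fermatQuotient_of_eq_mul_add_one (hp2 : p ≠ 2) {a m : ℕ} (hpam : p = a * m + 1) :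
    (a : ZMod p) * fermatQuotient p a = -∑ j ∈ range a, harmonicZMod p ((j + 1) * m) := by
  have hp1 := hp.out.one_lt
  have hm : 0 < m := Nat.pos_of_ne_zero fun h => by simp [h] at hpam; omega
  have ha : 0 < a := Nat.pos_of_ne_zero fun h => by simp [h] at hpam; omega
  have hpa : ¬ p ∣ a := Nat.not_dvd_of_pos_of_lt ha (by nlinarith)
  have hfloor : ∀ j < a, ∀ k ∈ Ioc (j * m) ((j + 1) * m), k * a / p = j := by
    intro j hj k hk
    rw [mem_Ioc] at hk
    exact Nat.div_eq_of_lt_le (by rw [hpam]; nlinarith) (by rw [hpam]; nlinarith)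
  have hH : harmonicZMod p (a * m) = 0 := by
    rw [← harmonicZMod_sub_one hp2, hpam, Nat.add_sub_cancel]
  rw [natCast_mul_fermatQuotient_eq_sum hpa, show p - 1 = a * m by omega,
    sum_Ioc_zero_mul_eq_sum_range]
  calc ∑ j ∈ range a, ∑ k ∈ Ioc (j * m) ((j + 1) * m), ((k * a / p : ℕ) : ZMod p) * (k : ZMod p)⁻¹
      = ∑ j ∈ range a, (j : ZMod p) * (harmonicZMod p ((j + 1) * m) - harmonicZMod p (j * m)) := by
        refine sum_congr rfl fun j hj => ?_
        rw [← sum_Ioc_inv_eq_harmonicZMod_sub (by nlinarith), mul_sum]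
        exact sum_congr rfl fun k hk => by rw [hfloor j (mem_range.1 hj) k hk]
    _ = _ := by
        rw [sum_range_natCast_mul_sub (fun i => harmonicZMod p (i * m)), hH, mul_zero, zero_sub]

lemma four_mul_sum_range_inv_two_mul_add_one {n : ℕ} (hpn : p = 6 * n + 1) :
    4 * ∑ k ∈ range (n + 1), ((2 * k + 1 : ℕ) : ZMod p)⁻¹ =
      4 * fermatQuotient p 2 - 3 * fermatQuotient p 3 + 6 := by
  have hn : 0 < n := by have := hp.out.two_le; omega
  have hp2 : p ≠ 2 := by omega
  have h2 := natCast_mul_fermatQuotient_of_eq_mul_add_one hp2 (a := 2) (m := 3 * n) (by omega)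
  have h3 := natCast_mul_fermatQuotient_of_eq_mul_add_one hp2 (a := 3) (m := 2 * n) (by omega)
  have h6 := natCast_mul_fermatQuotient_of_eq_mul_add_one hp2 (a := 6) (m := n) (by omega)
  simp only [Nat.cast_ofNat, ← mul_assoc, sum_range_succ, range_one, sum_singleton, zero_add,
    one_mul, Nat.reduceAdd, Nat.reduceMul] at h2 h3 h6
  have h23 : (fermatQuotient p 6 : ZMod p) = fermatQuotient p 2 + fermatQuotient p 3 :=
    intCast_fermatQuotient_mul (a := 2) (b := 3) (Nat.not_dvd_of_pos_of_lt (by norm_num) (by omega))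
      (Nat.not_dvd_of_pos_of_lt (by norm_num) (by omega))
  have hH6 := harmonicZMod_sub_one (p := p) hp2
  have hH4 := harmonicZMod_sub_one_sub (p := p) hp2 (m := 2 * n) (by omega)
  have hH5 := harmonicZMod_sub_one_sub (p := p) hp2 (m := n) (by omega)
  rw [show p - 1 = 6 * n by omega] at hH6 hH4 hH5
  rw [show 6 * n - 2 * n = 4 * n by omega] at hH4
  rw [show 6 * n - n = 5 * n by omega] at hH5
  have hx : ((2 * n + 1 : ℕ) : ZMod p) * 3 = 2 := by
    have h : ((2 * n + 1 : ℕ) : ZMod p) * ((3 : ℕ) : ZMod p) = ((p + 2 : ℕ) : ZMod p) := by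
      rw [← Nat.cast_mul, show (2 * n + 1) * 3 = p + 2 by omega]
    rwa [Nat.cast_add p 2, ZMod.natCast_self, zero_add, Nat.cast_ofNat, Nat.cast_ofNat] at h
  have hinv : 2 * ((2 * n + 1 : ℕ) : ZMod p)⁻¹ = 3 := by
    rw [← hx, mul_comm, ← mul_assoc,
      inv_mul_cancel₀ (natCast_ne_zero_of_pos_of_lt (by omega) (by omega)), one_mul]
  linear_combination 2 * two_mul_sum_range_inv_two_mul_add_one hp2 n
    + 4 * harmonicZMod_succ (p := p) (2 * n) + 2 * hinv + h2 + 3 * h3 - h6 + 6 * h23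
    + hH5 - 2 * hH4 - 3 * hH6

end

theorem stmt6_general (p : ℕ) (hp : p.Prime) (h1 : p % 6 = 1) :
    ratCongr p (∑ k ∈ Finset.range ((p - 1) / 6 + 1), (1 : ℚ) / (2 * k + 1))
      (((2 ^ (p - 1) - 1 : ℚ) / p) - (3 / 4) * ((3 ^ (p - 1) - 1 : ℚ) / p) + 3 / 2) := by
  have : Fact p.Prime := ⟨hp⟩
  have hp2 := hp.two_le
  set n := (p - 1) / 6
  have hpn : p = 6 * n + 1 := by omega
  have h4 : ((4 : ℕ) : ZMod p) ≠ 0 := natCast_ne_zero_of_pos_of_lt (by norm_num) (by omega)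
  have hterm : ∀ k ∈ range (n + 1), (1 : ℚ) / (2 * k + 1) = ((2 * k + 1 : ℕ) : ℚ)⁻¹ := by
    intro k _
    push_cast
    rw [one_div]
  have hden : ∀ k ∈ range (n + 1), ((((2 * k + 1 : ℕ) : ℚ)⁻¹).den : ZMod p) ≠ 0 := by
    intro k hk
    rw [Rat.inv_natCast_den_of_pos (Nat.succ_pos (2 * k))]
    exact natCast_ne_zero_of_pos_of_lt (by omega) (by rw [mem_range] at hk; omega)
  have hq2 := fermatQuotient_eq_div (p := p) (a := 2)
    (Nat.not_dvd_of_pos_of_lt (by norm_num) (by omega))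
  have hq3 := fermatQuotient_eq_div (p := p) (a := 3)
    (Nat.not_dvd_of_pos_of_lt (by norm_num) (by omega))
  rw [Nat.cast_ofNat] at hq2 hq3
  rw [sum_congr rfl hterm, ← hq2, ← hq3,
    show (fermatQuotient p 2 : ℚ) - 3 / 4 * fermatQuotient p 3 + 3 / 2
        = ((4 * fermatQuotient p 2 - 3 * fermatQuotient p 3 + 6 : ℤ) : ℚ) / (4 : ℕ) by
      push_cast; ring]
  refine ratCongr_of_cast_eq (Rat.cast_den_sum_ne_zero hden)
    (Rat.cast_den_intCast_div_ne_zero _ h4) ?_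
  rw [Rat.cast_sum_of_cast_den_ne_zero hden, Rat.cast_intCast_div_natCast _ h4, eq_div_iff h4]
  simp only [Rat.cast_inv_nat]
  rw [mul_comm, Nat.cast_ofNat, four_mul_sum_range_inv_two_mul_add_one hpn]
  push_cast
  ring

theorem stmt6 (p : ℕ) (hp : p.Prime) (hp5 : 5 ≤ p) (h1 : p % 6 = 1) :
    ratCongr p (∑ k ∈ Finset.range ((p - 1) / 6 + 1), (1 : ℚ) / (2 * k + 1))
      (((2 ^ (p - 1) - 1 : ℚ) / p) - (3 / 4) * ((3 ^ (p - 1) - 1 : ℚ) / p) + 3 / 2) :=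
  stmt6_general p hp h1
end

section
/- For any nonnegative integers n and k, the trinomial coefficient satisfies T(n,k) = ∑_{j=0}^{k} C(n,j) C(n,k-j) cos((k-2j)π/3), where T(n,k) is defined by (1+x+x²)^n = ∑_{k=0}^{2n} T(n,k) x^k. -/
/-!
Over `ℂ`, `1 + 2 cos θ · x + x² = (1 + e^{iθ} x)(1 + e^{-iθ} x)`. Expanding both factors by
the binomial theorem and taking real parts, the coefficient of `x^k` in
`(1 + 2 cos θ · x + x²)^n` is `∑ C(n,j) C(n,k-j) cos((k-2j)θ)`; the trinomial case is `θ = π/3`,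
where `2 cos θ = 1`.
-/

/-- The trinomial coefficient: coefficient of x^k in (1+x+x^2)^n. -/
noncomputable def trinom (n k : ℕ) : ℤ :=
  ((1 + Polynomial.X + Polynomial.X ^ 2 : Polynomial ℤ) ^ n).coeff k

open Polynomial Finset Complex

theorem Polynomial.coeff_one_add_C_mul_X_pow {R : Type*} [CommSemiring R] (a : R) (n k : ℕ) :
    ((1 + C a * X) ^ n).coeff k = n.choose k * a ^ k := by
  have : (1 + C a * X) ^ n = ((1 + X) ^ n).comp (C a * X) := by simp
  rw [this, comp_C_mul_X_coeff, coeff_one_add_X_pow]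

theorem Polynomial.coeff_one_add_C_mul_X_mul_one_add_C_mul_X_pow {R : Type*} [CommSemiring R]
    (a b : R) (n k : ℕ) :
    (((1 + C a * X) * (1 + C b * X)) ^ n).coeff k =
      ∑ j ∈ range (k + 1), n.choose j * n.choose (k - j) * (a ^ j * b ^ (k - j)) := by
  rw [mul_pow, coeff_mul, Nat.sum_antidiagonal_eq_sum_range_succ_mk]
  refine sum_congr rfl fun j _ => ?_
  rw [coeff_one_add_C_mul_X_pow, coeff_one_add_C_mul_X_pow]
  ring

theorem Polynomial.one_add_C_two_cos_mul_X_add_X_sq_eq_mul (θ : ℝ) :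
    (1 + C (2 * Real.cos θ : ℂ) * X + X ^ 2 : ℂ[X]) =
      (1 + C (exp (θ * I)) * X) * (1 + C (exp (-θ * I)) * X) := by
  have hsum : exp (θ * I) + exp (-θ * I) = 2 * Real.cos θ := by
    rw [ofReal_cos, cos]; ring_nf
  have hprod : exp (θ * I) * exp (-θ * I) = 1 := by
    rw [← exp_add]; simp
  calc (1 + C (2 * Real.cos θ : ℂ) * X + X ^ 2 : ℂ[X])
      = 1 + C (exp (θ * I) + exp (-θ * I)) * X + C (exp (θ * I) * exp (-θ * I)) * X ^ 2 := by
        rw [hsum, hprod, C_1, one_mul]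
    _ = _ := by simp only [C_add, C_mul]; ring

theorem Polynomial.coeff_one_add_C_two_cos_mul_X_add_X_sq_pow (θ : ℝ) (n k : ℕ) :
    ((1 + C (2 * Real.cos θ) * X + X ^ 2 : ℝ[X]) ^ n).coeff k =
      ∑ j ∈ range (k + 1),
        (n.choose j : ℝ) * n.choose (k - j) * Real.cos ((k - 2 * j) * θ) := by
  have hcoeff : ((1 + C (2 * Real.cos θ) * X + X ^ 2 : ℝ[X]) ^ n).coeff k =
      (((1 + C (2 * Real.cos θ : ℂ) * X + X ^ 2 : ℂ[X]) ^ n).coeff k).re := by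
    rw [← ofReal_re (((1 + C (2 * Real.cos θ) * X + X ^ 2 : ℝ[X]) ^ n).coeff k),
      ← ofRealHom_eq_coe, ← coeff_map]
    simp
  rw [hcoeff, one_add_C_two_cos_mul_X_add_X_sq_eq_mul,
    coeff_one_add_C_mul_X_mul_one_add_C_mul_X_pow, re_sum]
  refine sum_congr rfl fun j hj => ?_
  have hjk : j ≤ k := Nat.lt_succ_iff.mp (mem_range.mp hj)
  have hexp : exp (θ * I) ^ j * exp (-θ * I) ^ (k - j) =
      exp (((-((k - 2 * j) * θ) : ℝ) : ℂ) * I) := by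
    rw [← exp_nat_mul, ← exp_nat_mul, ← exp_add]
    push_cast [hjk]
    ring_nf
  rw [hexp, ← ofReal_natCast, ← ofReal_natCast, ← ofReal_mul,
    re_ofReal_mul, exp_ofReal_mul_I_re, Real.cos_neg]

theorem Int.cast_trinom {R : Type*} [Ring R] (n k : ℕ) :
    (trinom n k : R) = ((1 + X + X ^ 2 : R[X]) ^ n).coeff k := by
  rw [trinom, ← eq_intCast (Int.castRingHom R), ← coeff_map]
  simp

theorem stmt12 (n k : ℕ) :
    (trinom n k : ℝ) =
      ∑ j ∈ Finset.range (k + 1),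
        (n.choose j : ℝ) * (n.choose (k - j) : ℝ) *
          Real.cos (((k : ℤ) - 2 * (j : ℤ)) * Real.pi / 3) := by
  have htwo_cos : (1 + X + X ^ 2 : ℝ[X]) = 1 + C (2 * Real.cos (Real.pi / 3)) * X + X ^ 2 := by
    rw [Real.cos_pi_div_three]; norm_num
  rw [Int.cast_trinom, htwo_cos, coeff_one_add_C_two_cos_mul_X_add_X_sq_pow]
  push_cast
  simp only [mul_div_assoc]
end
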